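/- Let C be a configuration whose smallest enclosing rectangle, after translating so that its corners are A = (0,0), B = (n−1, 0), C = (n−1, m−1), D = (0, m−1), has width n ≥ 1 and height m ≥ 1. Define ρ : ℤ² → ℤ² by ρ(x, y) = (n−1−x, m−1−y) (rotation by 180° about the centre of the rectangle). Then λ_AB = λ_CD if and only if ρ maps C onto C, i.e. C is invariant under the 180° rotation about the centre of its smallest enclosing rectangle. -/

import Mathlib

/-! Robots occupy distinct points of the integer grid `ℤ²`; a configuration is a
nonempty finite set `C : Finset (ℤ × ℤ)`.  Throughout, the smallest enclosing
rectangle is translated so that its corners are `A = (0,0)`, `B = (n-1,0)`,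
`C = (n-1,m-1)`, `D = (0,m-1)`, where `n` is the number of grid points on side
`AB` and `m` the number of grid points on side `AD`. -/

/-- Occupancy scan of a rectangle: `M` successive grid lines, each holding `N`
grid points; `f i j` is the grid point on the `i`-th line at position `j`;
record `true` at occupied and `false` at unoccupied grid points. -/
def scanStr (C : Finset (ℤ × ℤ)) (M N : ℕ) (f : ℕ → ℕ → ℤ × ℤ) : List Bool :=
  (List.range M).flatMap (fun i => (List.range N).map (fun j => decide (f i j ∈ C)))

/-- `λ_AB`: rows `y = 0, …, m-1`, each scanned with `x` ascending. -/
def lamAB (C : Finset (ℤ × ℤ)) (n m : ℕ) : List Bool :=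
  scanStr C m n (fun y x => ((x : ℤ), (y : ℤ)))

/-- `λ_BA`: rows `y = 0, …, m-1`, each scanned with `x` descending. -/
def lamBA (C : Finset (ℤ × ℤ)) (n m : ℕ) : List Bool :=
  scanStr C m n (fun y x => ((n : ℤ) - 1 - x, (y : ℤ)))

/-- `λ_CD`: rows `y = m-1, …, 0`, each scanned with `x` descending. -/
def lamCD (C : Finset (ℤ × ℤ)) (n m : ℕ) : List Bool :=
  scanStr C m n (fun y x => ((n : ℤ) - 1 - x, (m : ℤ) - 1 - y))

/-- `λ_DC`: rows `y = m-1, …, 0`, each scanned with `x` ascending. -/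
def lamDC (C : Finset (ℤ × ℤ)) (n m : ℕ) : List Bool :=
  scanStr C m n (fun y x => ((x : ℤ), (m : ℤ) - 1 - y))

/-- `λ_BC`: columns `x = n-1, …, 0`, each scanned with `y` ascending. -/
def lamBC (C : Finset (ℤ × ℤ)) (n m : ℕ) : List Bool :=
  scanStr C n m (fun x y => ((n : ℤ) - 1 - x, (y : ℤ)))

/-- `λ_CB`: columns `x = n-1, …, 0`, each scanned with `y` descending. -/
def lamCB (C : Finset (ℤ × ℤ)) (n m : ℕ) : List Bool :=
  scanStr C n m (fun x y => ((n : ℤ) - 1 - x, (m : ℤ) - 1 - y))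

/-- `λ_AD`: columns `x = 0, …, n-1`, each scanned with `y` ascending. -/
def lamAD (C : Finset (ℤ × ℤ)) (n m : ℕ) : List Bool :=
  scanStr C n m (fun x y => ((x : ℤ), (y : ℤ)))

/-- `λ_DA`: columns `x = 0, …, n-1`, each scanned with `y` descending. -/
def lamDA (C : Finset (ℤ × ℤ)) (n m : ℕ) : List Bool :=
  scanStr C n m (fun x y => ((x : ℤ), (m : ℤ) - 1 - y))

/-- Strict lexicographic comparison of binary strings. -/
def lexLt (a b : List Bool) : Prop := List.Lex (· < ·) a b

/-- The smallest enclosing rectangle of `C` is `[0, n-1] × [0, m-1]`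
(`n` grid points wide, `m` grid points high). -/
def isSER (C : Finset (ℤ × ℤ)) (n m : ℕ) : Prop :=
  (∀ p ∈ C, 0 ≤ p.1 ∧ p.1 ≤ (n : ℤ) - 1 ∧ 0 ≤ p.2 ∧ p.2 ≤ (m : ℤ) - 1) ∧
  (∃ p ∈ C, p.1 = 0) ∧ (∃ p ∈ C, p.1 = (n : ℤ) - 1) ∧
  (∃ p ∈ C, p.2 = 0) ∧ (∃ p ∈ C, p.2 = (m : ℤ) - 1)

/-- The order in which grid points are visited by the scan `λ_AB`:
`p` comes strictly before `q`. -/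
def scanLt (p q : ℤ × ℤ) : Prop := p.2 < q.2 ∨ (p.2 = q.2 ∧ p.1 < q.1)

/-- `h` is the head of `C`: the robot at the position of the first `1` of `λ_AB`. -/
def isHead (C : Finset (ℤ × ℤ)) (h : ℤ × ℤ) : Prop :=
  h ∈ C ∧ ∀ p ∈ C, p ≠ h → scanLt h p

/-- `t` is the tail of `C`: the robot at the position of the last `1` of `λ_AB`. -/
def isTail (C : Finset (ℤ × ℤ)) (t : ℤ × ℤ) : Prop :=
  t ∈ C ∧ ∀ p ∈ C, p ≠ t → scanLt p t

/-- The four associated strings of a non-square configuration. -/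
def strings4 (C : Finset (ℤ × ℤ)) (n m : ℕ) : List (List Bool) :=
  [lamAB C n m, lamBA C n m, lamCD C n m, lamDC C n m]

/-- The eight associated strings of a configuration whose rectangle is a square. -/
def strings8 (C : Finset (ℤ × ℤ)) (n m : ℕ) : List (List Bool) :=
  [lamAB C n m, lamBA C n m, lamCD C n m, lamDC C n m,
   lamBC C n m, lamCB C n m, lamAD C n m, lamDA C n m]

/-- The associated strings of `C`: eight of them if the rectangle is a square,
four otherwise. -/
def assocStrings (C : Finset (ℤ × ℤ)) (n m : ℕ) : List (List Bool) :=
  if n = m then strings8 C n m else strings4 C n m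

/-- The `i`-th member of the list `L` of associated strings is the unique
lexicographically largest one: every other member (by position) is strictly
smaller. -/
def uniqueMaxAt (L : List (List Bool)) (i : ℕ) : Prop :=
  i < L.length ∧ ∀ j < L.length, j ≠ i → lexLt (L.getD j []) (L.getD i [])

/-- `C` is asymmetric: among its associated strings there is a unique
lexicographically largest one. -/
def asymmetricCfg (C : Finset (ℤ × ℤ)) (n m : ℕ) : Prop :=
  ∃ i, uniqueMaxAt (assocStrings C n m) i

/-- `λ_AB` is the unique lexicographically largest associated string of `C`
(so `C` is asymmetric with leading corner `A`). -/
def leadingABCfg (C : Finset (ℤ × ℤ)) (n m : ℕ) : Prop :=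
  uniqueMaxAt (assocStrings C n m) 0

/-! Rotating the configuration by `ρ` turns the scan `λ_CD` of `C` into the scan `λ_AB` of `ρ C`,
and `λ_AB` determines a configuration inside the rectangle: so `λ_AB C = λ_CD C` says exactly
`C = ρ C`. -/

section Scan

variable (C D : Finset (ℤ × ℤ)) (M N : ℕ) (f g : ℕ → ℕ → ℤ × ℤ)

theorem scanStr_succ :
    scanStr C (M + 1) N f = scanStr C M N f ++ (List.range N).map (fun j => decide (f M j ∈ C)) := by
  simp [scanStr, List.range_succ]

theorem scanStr_eq_scanStr_iff :
    scanStr C M N f = scanStr D M N g ↔ ∀ i < M, ∀ j < N, (f i j ∈ C ↔ g i j ∈ D) := by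
  induction M with
  | zero => simp [scanStr]
  | succ M ih =>
    have last_row_eq_iff : (List.range N).map (fun j => decide (f M j ∈ C)) =
        (List.range N).map (fun j => decide (g M j ∈ D)) ↔ ∀ j < N, (f M j ∈ C ↔ g M j ∈ D) := by
      simp
    rw [scanStr_succ, scanStr_succ, Nat.forall_lt_succ_right, ← ih, ← last_row_eq_iff]
    exact ⟨fun h => List.append_inj' h (by simp), fun ⟨h₁, h₂⟩ => by rw [h₁, h₂]⟩

end Scan

def InRect (n m : ℕ) (p : ℤ × ℤ) : Prop := 0 ≤ p.1 ∧ p.1 ≤ (n : ℤ) - 1 ∧ 0 ≤ p.2 ∧ p.2 ≤ (m : ℤ) - 1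

def rot180 (n m : ℕ) (p : ℤ × ℤ) : ℤ × ℤ := ((n : ℤ) - 1 - p.1, (m : ℤ) - 1 - p.2)

theorem rot180_involutive (n m : ℕ) : Function.Involutive (rot180 n m) := by
  intro p
  simp [rot180]

theorem mem_image_rot180 {C : Finset (ℤ × ℤ)} {n m : ℕ} {p : ℤ × ℤ} :
    p ∈ C.image (rot180 n m) ↔ rot180 n m p ∈ C := by
  rw [Finset.mem_image]
  exact ⟨by rintro ⟨q, hq, rfl⟩; rwa [rot180_involutive n m q],
    fun hp => ⟨_, hp, rot180_involutive n m p⟩⟩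

theorem InRect.rot180 {n m : ℕ} {p : ℤ × ℤ} (hp : InRect n m p) : InRect n m (rot180 n m p) := by
  unfold InRect _root_.rot180 at *
  omega

theorem forall_inRect_image_rot180 {C : Finset (ℤ × ℤ)} {n m : ℕ} (hC : ∀ p ∈ C, InRect n m p) :
    ∀ p ∈ C.image (rot180 n m), InRect n m p :=
  Finset.forall_mem_image.mpr fun p hp => (hC p hp).rot180

theorem lamCD_eq_lamAB_image_rot180 (C : Finset (ℤ × ℤ)) (n m : ℕ) :
    lamCD C n m = lamAB (C.image (rot180 n m)) n m := by
  rw [lamCD, lamAB, scanStr_eq_scanStr_iff]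
  intro i _ j _
  rw [mem_image_rot180]
  rfl

theorem lamAB_inj_of_forall_inRect {C D : Finset (ℤ × ℤ)} {n m : ℕ}
    (hC : ∀ p ∈ C, InRect n m p) (hD : ∀ p ∈ D, InRect n m p) :
    lamAB C n m = lamAB D n m ↔ C = D := by
  rw [lamAB, lamAB, scanStr_eq_scanStr_iff]
  refine ⟨fun h => ?_, fun h => by simp [h]⟩
  ext ⟨x, y⟩
  by_cases hxy : InRect n m (x, y)
  · obtain ⟨hx₀, hx₁, hy₀, hy₁⟩ := hxy
    lift x to ℕ using hx₀
    lift y to ℕ using hy₀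
    exact h y (by omega) x (by omega)
  · exact iff_of_false (fun hp => hxy (hC _ hp)) (fun hp => hxy (hD _ hp))

theorem lamAB_eq_lamCD_iff_rotation_invariant_general
    (C : Finset (ℤ × ℤ)) (n m : ℕ)
    (hser : isSER C n m) :
    lamAB C n m = lamCD C n m ↔
      C.image (fun p => ((n : ℤ) - 1 - p.1, (m : ℤ) - 1 - p.2)) = C := by
  rw [lamCD_eq_lamAB_image_rot180,
    lamAB_inj_of_forall_inRect hser.1 (forall_inRect_image_rot180 hser.1), eq_comm]
  rfl

/-- Let `C` be a configuration whose smallest enclosing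
rectangle, after translation, has corners `A = (0,0)`, `B = (n-1,0)`,
`C = (n-1,m-1)`, `D = (0,m-1)` with `n ≥ 1`, `m ≥ 1`.  Define
`ρ(x, y) = (n-1-x, m-1-y)` (rotation by `180°` about the centre of the
rectangle).  Then `λ_AB = λ_CD` if and only if `ρ` maps `C` onto `C`, i.e. `C`
is invariant under the `180°` rotation about the centre of its smallest
enclosing rectangle. -/
theorem lamAB_eq_lamCD_iff_rotation_invariant
    (C : Finset (ℤ × ℤ)) (n m : ℕ) (hn : 1 ≤ n) (hm : 1 ≤ m)
    (hser : isSER C n m) :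
    lamAB C n m = lamCD C n m ↔
      C.image (fun p => ((n : ℤ) - 1 - p.1, (m : ℤ) - 1 - p.2)) = C :=
  lamAB_eq_lamCD_iff_rotation_invariant_general C n m hser
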